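/- arXiv:1201.0666 — 4 statements merged into one kernel-verified Lean document; each statement's English description precedes it below -/
import Mathlib

section
/- For all integers p ≥ 1 and q ≥ 0, T(p, q) < 1, i.e. (2q+1)!!·(2p+2q−1)!!·π < q!·(p+q)!·2^{p+2q+1}. -/
open Real Nat

lemma sin_pow_succ_lt (n : ℕ) :
    (∫ x in (0:ℝ)..π, Real.sin x ^ (n + 1)) < ∫ x in (0:ℝ)..π, Real.sin x ^ n := by
  apply intervalIntegral.integral_lt_integral_of_continuousOn_of_le_of_exists_lt Real.pi_pos
    (Continuous.continuousOn (by continuity)) (Continuous.continuousOn (by continuity))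
  · intro x hx
    exact pow_le_pow_of_le_one (Real.sin_nonneg_of_nonneg_of_le_pi hx.1.le hx.2)
      (Real.sin_le_one x) (n.le_add_right 1)
  · refine ⟨π/4, ⟨by positivity, by linarith [Real.pi_pos]⟩, ?_⟩
    rw [Real.sin_pi_div_four]
    have h0 : (0:ℝ) < Real.sqrt 2 / 2 := by positivity
    have h1 : Real.sqrt 2 / 2 < 1 := by
      rw [div_lt_one (by norm_num)]
      nlinarith [Real.sq_sqrt (by norm_num : (2:ℝ) ≥ 0), Real.sqrt_nonneg 2]
    exact pow_lt_pow_right_of_lt_one₀ h0 h1 (Nat.lt_succ_self n)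

lemma odd_df (n : ℕ) : (2*n+1)‼ = (2*n+1) * (2*n-1)‼ := by
  cases n with
  | zero => decide
  | succ k =>
      have h1 : 2*(k+1)+1 = (2*k+1)+2 := by omega
      have h2 : 2*(k+1)-1 = 2*k+1 := by omega
      rw [h1, h2, Nat.doubleFactorial_add_two]

lemma prod_even_eq (n : ℕ) :
    (∏ i ∈ Finset.range n, (2*(i:ℝ)+1)/(2*i+2)) = ((2*n-1)‼ : ℝ) / (2^n * n !) := by
  induction n with
  | zero => simp
  | succ k ih =>
      rw [Finset.prod_range_succ, ih]
      have h2 : ((2*(k+1)-1)‼ : ℝ) = (2*k+1) * ((2*k-1)‼ : ℝ) := by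
        have : 2*(k+1)-1 = 2*k+1 := by omega
        rw [this, odd_df]; push_cast; ring
      rw [h2, Nat.factorial_succ]
      have hk : ((k ! : ℕ) : ℝ) ≠ 0 := Nat.cast_ne_zero.2 k.factorial_ne_zero
      have h2p : (2:ℝ)^k ≠ 0 := by positivity
      push_cast
      field_simp
      ring

lemma prod_odd_eq (n : ℕ) :
    (∏ i ∈ Finset.range n, (2*(i:ℝ)+2)/(2*i+3)) = ((2:ℝ)^n * n !) / ((2*n+1)‼ : ℝ) := by
  induction n with
  | zero => simp
  | succ k ih =>
      rw [Finset.prod_range_succ, ih]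
      have h2 : ((2*(k+1)+1)‼ : ℝ) = (2*k+3) * ((2*k+1)‼ : ℝ) := by
        have : 2*(k+1)+1 = (2*k+1)+2 := by omega
        rw [this, Nat.doubleFactorial_add_two]; push_cast; ring
      rw [h2, Nat.factorial_succ]
      have hk : ((2*k+1)‼ : ℝ) ≠ 0 := Nat.cast_ne_zero.2 (Nat.doubleFactorial_pos _).ne'
      push_cast
      field_simp
      ring

/-- For integers `p ≥ 1`, `q ≥ 0`,
`T(p, q) = (2q+1)!!·(2p+2q−1)!!·π / (q!·(p+q)!·2^{p+2q+1})`. -/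
noncomputable def T (p q : ℕ) : ℝ :=
  (Nat.doubleFactorial (2 * q + 1) * Nat.doubleFactorial (2 * p + 2 * q - 1) * Real.pi) /
    (Nat.factorial q * Nat.factorial (p + q) * 2 ^ (p + 2 * q + 1))

/-- for all integers `p ≥ 1` and `q ≥ 0`, `T(p, q) < 1`, i.e.
`(2q+1)!!·(2p+2q−1)!!·π < q!·(p+q)!·2^{p+2q+1}`. -/
theorem T_lt_one (p q : ℕ) (hp : 1 ≤ p) :
    T p q < 1 ∧
      (Nat.doubleFactorial (2 * q + 1) : ℝ) * Nat.doubleFactorial (2 * p + 2 * q - 1) *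
          Real.pi <
        (Nat.factorial q : ℝ) * Nat.factorial (p + q) * 2 ^ (p + 2 * q + 1) := by
  set m := p + q with hm
  have h1 : (∫ x in (0:ℝ)..π, Real.sin x ^ (2*m)) ≤ ∫ x in (0:ℝ)..π, Real.sin x ^ (2*(q+1)) :=
    integral_sin_pow_antitone (by omega)
  have h2 : (∫ x in (0:ℝ)..π, Real.sin x ^ (2*(q+1))) < ∫ x in (0:ℝ)..π, Real.sin x ^ (2*q+1) := by
    have := sin_pow_succ_lt (2*q+1)
    simpa [show 2*q+1+1 = 2*(q+1) from by omega] using this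
  have h := lt_of_le_of_lt h1 h2
  rw [integral_sin_pow_even, integral_sin_pow_odd, prod_even_eq, prod_odd_eq,
    ← mul_div_assoc, ← mul_div_assoc] at h
  have hB : (0:ℝ) < 2^m * (m ! : ℕ) := by positivity
  have hD : (0:ℝ) < ((2*q+1)‼ : ℕ) := by exact_mod_cast Nat.doubleFactorial_pos _
  rw [div_lt_div_iff₀ hB hD] at h
  have e1 : ((2*p+2*q-1)‼ : ℝ) = ((2*m-1)‼ : ℝ) := by
    norm_num [show 2*p+2*q-1 = 2*m-1 from by omega]
  have e2 : (2:ℝ)^(p+2*q+1) = 2 * 2^q * 2^m := by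
    rw [show p+2*q+1 = q+m+1 from by omega, pow_add, pow_add]; ring
  have main : ((2*q+1)‼ : ℝ) * ((2*p+2*q-1)‼ : ℝ) * π <
      (q ! : ℝ) * ((p+q)! : ℝ) * 2^(p+2*q+1) := by
    rw [e1, e2]
    calc ((2*q+1)‼ : ℝ) * ((2*m-1)‼ : ℝ) * π
        = π * ((2*m-1)‼ : ℕ) * ((2*q+1)‼ : ℕ) := by ring
      _ < 2 * ((2:ℝ)^q * (q ! : ℕ)) * ((2:ℝ)^m * (m ! : ℕ)) := h
      _ = (q ! : ℝ) * ((m)! : ℕ) * (2 * 2^q * 2^m) := by ring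
  refine ⟨?_, main⟩
  rw [T, div_lt_one (by positivity)]
  push_cast
  push_cast at main
  linarith
end

section
/- Let m1, m2 be integers with m1 ≥ 2 and m2 ≥ 2, and set s := (1/2)·(1 − √(m2/(m1+m2))). Then A(m1, m2) := ((m1−1)/(m1+m2)) · ((m1+m2+1)/(m1+m2)) · (1/s) ≥ 2. -/
/-!
With `N = m1 + m2` and `t = √(m2 / N)`, clearing the (positive) denominators turns the claim
into `m2 N + m2 + 1 ≤ N² t = √(m2 N³)`. After squaring this is a polynomial inequality, which
holds as soon as `m2 ≥ 1` and `N ≥ m2 + 2`, i.e. `m1 ≥ 2`.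
-/

lemma sq_mul_add_add_one_le_mul_pow_three {b N : ℝ} (hb : 1 ≤ b) (hN : b + 2 ≤ N) :
    (b * N + b + 1) ^ 2 ≤ b * N ^ 3 := by
  have hb0 : 0 ≤ b := by linarith
  have hN0 : 0 ≤ N := by linarith
  have hgap : 0 ≤ N - b - 2 := by linarith
  -- `b N³ - (b N + b + 1)² = (b N² + 2 b N + 2 b) (N - b - 2) + (b² + 2 b - 1)`
  nlinarith [mul_nonneg (mul_nonneg hb0 (sq_nonneg N)) hgap,
    mul_nonneg (mul_nonneg hb0 hN0) hgap, mul_nonneg hb0 hgap]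

lemma mul_add_add_one_le_sq_mul_sqrt_div {b N : ℝ} (hb : 1 ≤ b) (hN : b + 2 ≤ N) :
    b * N + b + 1 ≤ N ^ 2 * √(b / N) := by
  have hN0 : 0 < N := by linarith
  have hsqrt : N ^ 2 * √(b / N) = √(b * N ^ 3) := by
    rw [show b * N ^ 3 = (N ^ 2) ^ 2 * (b / N) by field_simp, Real.sqrt_mul' _ (by positivity),
      Real.sqrt_sq (by positivity)]
  rw [hsqrt, Real.le_sqrt (by positivity) (by positivity)]
  exact sq_mul_add_add_one_le_mul_pow_three hb hN

lemma two_le_isoparametric_ratio {a b : ℝ} (ha : 2 ≤ a) (hb : 1 ≤ b) :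
    2 ≤ ((a - 1) / (a + b)) * ((a + b + 1) / (a + b)) *
        (1 / ((1 / 2) * (1 - √(b / (a + b))))) := by
  have hN : 0 < a + b := by linarith
  have ht : √(b / (a + b)) < 1 :=
    (Real.sqrt_lt' one_pos).mpr (by rw [one_pow, div_lt_one hN]; linarith)
  have hkey := mul_add_add_one_le_sq_mul_sqrt_div hb (N := a + b) (by linarith)
  have hs : 0 < 1 - √(b / (a + b)) := by linarith
  rw [show ((a - 1) / (a + b)) * ((a + b + 1) / (a + b)) * (1 / ((1 / 2) * (1 - √(b / (a + b)))))
      = 2 * ((a - 1) * (a + b + 1)) / ((a + b) ^ 2 * (1 - √(b / (a + b)))) by field_simp,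
    le_div_iff₀ (by positivity)]
  nlinarith

/-- for integers `m1, m2 ≥ 2`, with
`s = (1/2)·(1 − √(m2/(m1+m2)))` (the value of `sin²θ₁` for the minimal isoparametric
hypersurface), the quantity
`A(m1, m2) = ((m1−1)/(m1+m2))·((m1+m2+1)/(m1+m2))·(1/s)` is at least `2`. -/
theorem A_ge_two (m1 m2 : ℕ) (hm1 : 2 ≤ m1) (hm2 : 2 ≤ m2) :
    2 ≤ (((m1 : ℝ) - 1) / ((m1 : ℝ) + m2)) * (((m1 : ℝ) + m2 + 1) / ((m1 : ℝ) + m2)) *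
        (1 / ((1 / 2) * (1 - Real.sqrt ((m2 : ℝ) / ((m1 : ℝ) + m2))))) :=
  two_le_isoparametric_ratio (by exact_mod_cast hm1) (by exact_mod_cast (by omega : 1 ≤ m2))
end

section
/- For all integers m1 ≥ 2 and m2 ≥ 1, ∫₀^{π/4} sin^{m1}(2x)·cos^{m2}(2x) / sin²(x) dx = (1/2)·[ B((m1−1)/2, (m2+1)/2) + B((m1−1)/2, (m2+2)/2) ]. -/
/-!
Since `sin²(2x) / sin² x = 4 cos² x = 2 (1 + cos 2x)`, the substitution `u = 2x` turns the
integral into `W(m1 - 2, m2) + W(m1 - 2, m2 + 1)`, where `W(a, b) = ∫₀^{π/2} sin^a cos^b`.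
Reflection `u ↦ π/2 - u` gives `W(a, b) = W(b, a)`, integration by parts gives
`W(a + 2, b) = (a + 1) / (a + b + 2) · W(a, b)`, and `W(a, 1) = 1 / (a + 1)`, `W(0, 0) = π / 2`.
These are the recursion and the initial values of `B((a + 1) / 2, (b + 1) / 2) / 2`.
-/

open Real

/-- The Beta function `B(x, y) = Γ(x)·Γ(y)/Γ(x+y)`. -/
noncomputable def Beta (x y : ℝ) : ℝ := Real.Gamma x * Real.Gamma y / Real.Gamma (x + y)

theorem Beta_comm (x y : ℝ) : Beta x y = Beta y x := by
  rw [Beta, Beta, mul_comm, add_comm]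

theorem Beta_add_one_left {x y : ℝ} (hx : 0 < x) (hy : 0 < y) :
    Beta (x + 1) y = x / (x + y) * Beta x y := by
  have hxy : Gamma (x + y) ≠ 0 := (Gamma_pos_of_pos (by positivity)).ne'
  rw [Beta, Beta, Gamma_add_one hx.ne', add_right_comm, Gamma_add_one (by positivity)]
  field_simp

theorem Beta_one_right {x : ℝ} (hx : 0 < x) : Beta x 1 = 1 / x := by
  have hΓ : Gamma x ≠ 0 := (Gamma_pos_of_pos hx).ne'
  rw [Beta, Gamma_add_one hx.ne', Gamma_one]
  field_simp

theorem Beta_one_half_one_half : Beta (1 / 2) (1 / 2) = π := by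
  rw [Beta, add_halves, Gamma_one, Gamma_one_half_eq, div_one, mul_self_sqrt pi_pos.le]

noncomputable def sinCosIntegral (a b : ℕ) : ℝ :=
  ∫ x in (0 : ℝ)..π / 2, sin x ^ a * cos x ^ b

theorem sinCosIntegral_comm (a b : ℕ) : sinCosIntegral a b = sinCosIntegral b a := by
  have := intervalIntegral.integral_comp_sub_left (fun x => sin x ^ b * cos x ^ a) (π / 2)
    (a := 0) (b := π / 2)
  simp only [sin_pi_div_two_sub, cos_pi_div_two_sub, sub_zero, sub_self] at this
  rw [sinCosIntegral, sinCosIntegral, ← this]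
  simp only [mul_comm]

theorem sinCosIntegral_zero_zero : sinCosIntegral 0 0 = π / 2 := by
  simp [sinCosIntegral]

theorem sinCosIntegral_one_right (a : ℕ) : sinCosIntegral a 1 = 1 / (a + 1) := by
  simpa [sinCosIntegral] using integral_sin_pow_mul_cos_pow_odd (a := 0) (b := π / 2) a 0

/-- Integration by parts: the difference of the integrands is `(sin^(a+1) cos^(b+1))'`. -/
theorem sinCosIntegral_parts (a b : ℕ) :
    (a + 1) * sinCosIntegral a (b + 2) = (b + 1) * sinCosIntegral (a + 2) b := by
  have hderiv : ∀ x ∈ Set.uIcc 0 (π / 2),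
      HasDerivAt (fun y => sin y ^ (a + 1) * cos y ^ (b + 1))
        ((a + 1) * (sin x ^ a * cos x ^ (b + 2)) - (b + 1) * (sin x ^ (a + 2) * cos x ^ b)) x := by
    intro x _
    refine (((hasDerivAt_sin x).fun_pow (a + 1)).fun_mul
      ((hasDerivAt_cos x).fun_pow (b + 1))).congr_deriv ?_
    simp only [Nat.cast_add, Nat.cast_one, add_tsub_cancel_right]
    ring
  have hint : ∀ m n : ℕ,
      IntervalIntegrable (fun x => sin x ^ m * cos x ^ n) MeasureTheory.volume 0 (π / 2) :=
    fun m n => (by fun_prop : Continuous _).intervalIntegrable _ _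
  have := intervalIntegral.integral_eq_sub_of_hasDerivAt hderiv
    (((hint a (b + 2)).const_mul _).sub ((hint (a + 2) b).const_mul _))
  rw [intervalIntegral.integral_sub ((hint a (b + 2)).const_mul _) ((hint (a + 2) b).const_mul _),
    intervalIntegral.integral_const_mul, intervalIntegral.integral_const_mul] at this
  simp only [sin_pi_div_two, cos_pi_div_two, sin_zero, cos_zero, one_pow, mul_one, ne_eq,
    Nat.add_eq_zero_iff, one_ne_zero, and_false, not_false_eq_true, zero_pow, mul_zero,
    sub_self] at this
  rw [sinCosIntegral, sinCosIntegral]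
  linarith

theorem sinCosIntegral_add_two_right_add_add_two_left (a b : ℕ) :
    sinCosIntegral a (b + 2) + sinCosIntegral (a + 2) b = sinCosIntegral a b := by
  rw [sinCosIntegral, sinCosIntegral, ← intervalIntegral.integral_add
    ((by fun_prop : Continuous _).intervalIntegrable _ _)
    ((by fun_prop : Continuous _).intervalIntegrable _ _)]
  congr 1 with x
  linear_combination sin x ^ a * cos x ^ b * sin_sq_add_cos_sq x

theorem sinCosIntegral_add_two_left (a b : ℕ) :
    sinCosIntegral (a + 2) b = (a + 1) / (a + b + 2) * sinCosIntegral a b := by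
  rw [← sinCosIntegral_add_two_right_add_add_two_left a b, div_mul_eq_mul_div,
    eq_div_iff (by positivity)]
  linear_combination -sinCosIntegral_parts a b

theorem sinCosIntegral_add_two_left_eq_beta {a b : ℕ}
    (h : sinCosIntegral a b = 1 / 2 * Beta ((a + 1) / 2) ((b + 1) / 2)) :
    sinCosIntegral (a + 2) b = 1 / 2 * Beta ((↑(a + 2) + 1) / 2) ((b + 1) / 2) := by
  have hsplit : ((↑(a + 2) : ℝ) + 1) / 2 = (a + 1) / 2 + 1 := by push_cast; ring
  rw [sinCosIntegral_add_two_left, h, hsplit, Beta_add_one_left (by positivity) (by positivity)]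
  field_simp
  ring

theorem sinCosIntegral_eq_beta (a b : ℕ) :
    sinCosIntegral a b = 1 / 2 * Beta ((a + 1) / 2) ((b + 1) / 2) := by
  let P (a b : ℕ) : Prop := sinCosIntegral a b = 1 / 2 * Beta ((a + 1) / 2) ((b + 1) / 2)
  have hsymm {a b : ℕ} (h : P a b) : P b a := by
    simp only [P, sinCosIntegral_comm b a, h, Beta_comm]
  have hrec (b : ℕ) (h0 : P 0 b) (h1 : P 1 b) (a : ℕ) : P a b := by
    induction a using Nat.twoStepInduction with
    | zero => exact h0
    | one => exact h1
    | more a ih _ => exact sinCosIntegral_add_two_left_eq_beta ih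
  have hone (a : ℕ) : P a 1 := by
    have ha : (0 : ℝ) < (a + 1) / 2 := by positivity
    simp only [P, sinCosIntegral_one_right, Nat.cast_one, add_self_div_two, Beta_one_right ha]
    field_simp
  have hzero (a : ℕ) : P a 0 :=
    hrec 0 (by simp only [P, sinCosIntegral_zero_zero, Nat.cast_zero, zero_add,
      Beta_one_half_one_half]; ring) (hsymm (hone 0)) a
  exact hsymm (hrec a (hsymm (hzero a)) (hsymm (hone a)) b)

theorem sin_two_mul_pow_add_two_div_sin_sq {x : ℝ} (hx : sin x ≠ 0) (k m : ℕ) :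
    sin (2 * x) ^ (k + 2) * cos (2 * x) ^ m / sin x ^ 2 =
      2 * (sin (2 * x) ^ k * cos (2 * x) ^ m * (1 + cos (2 * x))) := by
  rw [sin_two_mul, cos_two_mul]
  field_simp
  ring

theorem integral_sin_pow_mul_cos_pow_mul_one_add_cos (k m : ℕ) :
    ∫ u in (0 : ℝ)..π / 2, sin u ^ k * cos u ^ m * (1 + cos u) =
      sinCosIntegral k m + sinCosIntegral k (m + 1) := by
  rw [sinCosIntegral, sinCosIntegral, ← intervalIntegral.integral_add
    ((by fun_prop : Continuous _).intervalIntegrable _ _)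
    ((by fun_prop : Continuous _).intervalIntegrable _ _)]
  congr 1 with u
  ring

theorem integral_K1_eq_beta_general (m1 m2 : ℕ) (hm1 : 2 ≤ m1) :
    ∫ x in (0 : ℝ)..(Real.pi / 4),
        Real.sin (2 * x) ^ m1 * Real.cos (2 * x) ^ m2 / Real.sin x ^ 2 =
      (1 / 2) * (Beta (((m1 : ℝ) - 1) / 2) (((m2 : ℝ) + 1) / 2) +
        Beta (((m1 : ℝ) - 1) / 2) (((m2 : ℝ) + 2) / 2)) := by
  obtain ⟨k, rfl⟩ := Nat.exists_eq_add_of_le' hm1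
  have hsin : ∀ x ∈ Set.uIoc 0 (π / 4), sin x ≠ 0 := by
    rw [Set.uIoc_of_le (by positivity)]
    exact fun x hx => (sin_pos_of_pos_of_lt_pi hx.1 (by linarith [hx.2, pi_pos])).ne'
  calc _ = ∫ x in (0 : ℝ)..π / 4,
          2 * (sin (2 * x) ^ k * cos (2 * x) ^ m2 * (1 + cos (2 * x))) :=
        intervalIntegral.integral_congr_ae (.of_forall fun x hx =>
          sin_two_mul_pow_add_two_div_sin_sq (hsin x hx) k m2)
    _ = ∫ u in (0 : ℝ)..π / 2, sin u ^ k * cos u ^ m2 * (1 + cos u) := by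
        rw [intervalIntegral.integral_const_mul, ← smul_eq_mul,
          intervalIntegral.smul_integral_comp_mul_left
            fun u => sin u ^ k * cos u ^ m2 * (1 + cos u)]
        ring_nf
    _ = sinCosIntegral k m2 + sinCosIntegral k (m2 + 1) :=
        integral_sin_pow_mul_cos_pow_mul_one_add_cos k m2
    _ = _ := by
        rw [sinCosIntegral_eq_beta, sinCosIntegral_eq_beta]
        push_cast
        ring_nf

/-- for all integers `m1 ≥ 2`, `m2 ≥ 1`,
`∫₀^{π/4} sin^{m1}(2x)·cos^{m2}(2x)/sin²x dx
  = (1/2)·[B((m1−1)/2, (m2+1)/2) + B((m1−1)/2, (m2+2)/2)]`. -/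
theorem integral_K1_eq_beta (m1 m2 : ℕ) (hm1 : 2 ≤ m1) (hm2 : 1 ≤ m2) :
    ∫ x in (0 : ℝ)..(Real.pi / 4),
        Real.sin (2 * x) ^ m1 * Real.cos (2 * x) ^ m2 / Real.sin x ^ 2 =
      (1 / 2) * (Beta (((m1 : ℝ) - 1) / 2) (((m2 : ℝ) + 1) / 2) +
        Beta (((m1 : ℝ) - 1) / 2) (((m2 : ℝ) + 2) / 2)) :=
  integral_K1_eq_beta_general m1 m2 hm1
end

section
/- Let m1, m2 be integers with m1 ≥ 2 and m2 ≥ 2 that are not both even, or (m1, m2) = (2, 2). Set s := (1/2)·(1 − √(m2/(m1+m2))) and n := 2(m1+m2). Then s · ∫₀^{π/4} sin^{m1}(2x)·cos^{m2}(2x) / sin²(x) dx < ((n+2)/n) · ∫₀^{π/2} sin^{m1}(x)·cos^{m2}(x) dx. -/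
/-!
Since `sin² 2x / sin² x = 2 (1 + cos 2x)`, substituting `u = 2x` turns the left-hand
integral into `B + C` with `B = ∫₀^{π/2} sin^{m₁-2} cos^{m₂}` and
`C = ∫₀^{π/2} sin^{m₁-2} cos^{m₂+1} ≤ B`, while integration by parts gives
`G = (m₁ - 1) / (m₁ + m₂) · B`. The claim then reduces to the
algebraic inequality `1 - √(m₂/(m₁+m₂)) < (m₁+m₂+1)(m₁-1)/(m₁+m₂)²`.
-/

open Real intervalIntegral

lemma one_sub_sqrt_div_add_lt {x y : ℝ} (hx : 2 ≤ x) (hy : 2 ≤ y) :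
    1 - √(y / (x + y)) < (x + y + 1) * (x - 1) / (x + y) ^ 2 := by
  have hN : 0 < x + y := by linarith
  rw [sub_lt_comm]
  apply Real.lt_sqrt_of_sq_lt
  rw [show 1 - (x + y + 1) * (x - 1) / (x + y) ^ 2
      = ((x + y) * (y + 1) - x + 1) / (x + y) ^ 2 by field_simp; ring,
    div_pow, div_lt_div_iff₀ (by positivity) hN]
  nlinarith [mul_nonneg (sub_nonneg.2 hx) (sub_nonneg.2 hy), sq_nonneg (x - 2), sq_nonneg (y - 2),
    sq_nonneg (x + y - 4),
    mul_nonneg (mul_nonneg (sub_nonneg.2 hx) (sub_nonneg.2 hy)) (sub_nonneg.2 hy),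
    mul_nonneg (mul_nonneg (sub_nonneg.2 hx) (sub_nonneg.2 hx)) (sub_nonneg.2 hy)]

section SinCosMoments

variable (a b : ℕ)

lemma hasDerivAt_sin_pow_succ_mul_cos_pow_succ (x : ℝ) :
    HasDerivAt (fun x => sin x ^ (a + 1) * cos x ^ (b + 1))
      ((a + 1) * (sin x ^ a * cos x ^ (b + 2)) - (b + 1) * (sin x ^ (a + 2) * cos x ^ b)) x := by
  refine (((hasDerivAt_sin x).fun_pow (a + 1)).fun_mul
    ((hasDerivAt_cos x).fun_pow (b + 1))).congr_deriv ?_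
  simp only [Nat.add_sub_cancel]
  push_cast
  ring

lemma integral_sin_pow_add_two_mul_cos_pow :
    ((a : ℝ) + b + 2) * ∫ x in (0 : ℝ)..π / 2, sin x ^ (a + 2) * cos x ^ b
      = (a + 1) * ∫ x in (0 : ℝ)..π / 2, sin x ^ a * cos x ^ b := by
  have hparts : ∫ x in (0 : ℝ)..π / 2,
      ((a + 1) * (sin x ^ a * cos x ^ (b + 2)) - (b + 1) * (sin x ^ (a + 2) * cos x ^ b)) = 0 := by
    rw [integral_eq_sub_of_hasDerivAt (fun x _ => hasDerivAt_sin_pow_succ_mul_cos_pow_succ a b x)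
      ((by fun_prop : Continuous _).intervalIntegrable _ _)]
    simp [pow_succ]
  have hcos_sq : ∫ x in (0 : ℝ)..π / 2, sin x ^ a * cos x ^ (b + 2)
      = (∫ x in (0 : ℝ)..π / 2, sin x ^ a * cos x ^ b)
        - ∫ x in (0 : ℝ)..π / 2, sin x ^ (a + 2) * cos x ^ b := by
    rw [← integral_sub ((by fun_prop : Continuous _).intervalIntegrable _ _)
      ((by fun_prop : Continuous _).intervalIntegrable _ _)]
    refine integral_congr fun x _ => ?_
    simp only [pow_add, cos_sq']
    ring
  rw [integral_sub (((by fun_prop : Continuous _).intervalIntegrable _ _).const_mul _)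
    (((by fun_prop : Continuous _).intervalIntegrable _ _).const_mul _),
    integral_const_mul, integral_const_mul, hcos_sq] at hparts
  linarith

lemma integral_sin_two_mul_pow_add_two_mul_cos_two_mul_pow_div_sin_sq :
    ∫ x in (0 : ℝ)..π / 4, sin (2 * x) ^ (a + 2) * cos (2 * x) ^ b / sin x ^ 2
      = (∫ u in (0 : ℝ)..π / 2, sin u ^ a * cos u ^ b)
        + ∫ u in (0 : ℝ)..π / 2, sin u ^ a * cos u ^ (b + 1) := by
  have hπ : (0 : ℝ) ≤ π / 4 := by positivity
  have hdouble : ∫ x in (0 : ℝ)..π / 4, sin (2 * x) ^ (a + 2) * cos (2 * x) ^ b / sin x ^ 2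
      = ∫ x in (0 : ℝ)..π / 4,
          2 * ((1 + cos (2 * x)) * (sin (2 * x) ^ a * cos (2 * x) ^ b)) := by
    rw [integral_of_le hπ, integral_of_le hπ]
    refine MeasureTheory.setIntegral_congr_fun measurableSet_Ioc fun x hx => ?_
    have hsin : sin x ≠ 0 :=
      (sin_pos_of_pos_of_lt_pi hx.1 (by linarith [hx.2, pi_pos])).ne'
    simp only [sin_two_mul, cos_two_mul]
    field_simp
    ring
  rw [hdouble, integral_const_mul,
    integral_comp_mul_left (fun u => (1 + cos u) * (sin u ^ a * cos u ^ b)) two_ne_zero,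
    mul_zero, show 2 * (π / 4) = π / 2 by ring, smul_eq_mul, ← mul_assoc,
    mul_inv_cancel₀ two_ne_zero, one_mul,
    ← integral_add ((by fun_prop : Continuous _).intervalIntegrable _ _)
      ((by fun_prop : Continuous _).intervalIntegrable _ _)]
  refine integral_congr fun u _ => ?_
  simp only [pow_succ]
  ring

lemma integral_sin_pow_mul_cos_pow_pos :
    0 < ∫ x in (0 : ℝ)..π / 2, sin x ^ a * cos x ^ b := by
  refine intervalIntegral_pos_of_pos_on ((by fun_prop : Continuous _).intervalIntegrable _ _)
    (fun x hx => ?_) (by positivity)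
  have hsin : 0 < sin x := sin_pos_of_pos_of_lt_pi hx.1 (by linarith [hx.2, pi_pos])
  have hcos : 0 < cos x := cos_pos_of_mem_Ioo ⟨by linarith [hx.1, pi_pos], hx.2⟩
  positivity

lemma integral_sin_pow_mul_cos_pow_succ_le :
    ∫ x in (0 : ℝ)..π / 2, sin x ^ a * cos x ^ (b + 1)
      ≤ ∫ x in (0 : ℝ)..π / 2, sin x ^ a * cos x ^ b := by
  refine integral_mono_on (by positivity) ((by fun_prop : Continuous _).intervalIntegrable _ _)
    ((by fun_prop : Continuous _).intervalIntegrable _ _) fun x hx => ?_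
  have hsin : 0 ≤ sin x := sin_nonneg_of_nonneg_of_le_pi hx.1 (by linarith [hx.2, pi_pos])
  have hcos : 0 ≤ cos x := cos_nonneg_of_mem_Icc ⟨by linarith [hx.1, pi_pos], hx.2⟩
  exact mul_le_mul_of_nonneg_left (pow_le_pow_of_le_one hcos (cos_le_one x) (by omega))
    (pow_nonneg hsin a)

end SinCosMoments

theorem K1_lt_G_general (m1 m2 : ℕ) (hm1 : 2 ≤ m1) (hm2 : 2 ≤ m2) :
    (1 / 2) * (1 - Real.sqrt ((m2 : ℝ) / ((m1 : ℝ) + m2))) *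
        ∫ x in (0 : ℝ)..(Real.pi / 4),
          Real.sin (2 * x) ^ m1 * Real.cos (2 * x) ^ m2 / Real.sin x ^ 2 <
      ((2 * ((m1 : ℝ) + m2) + 2) / (2 * ((m1 : ℝ) + m2))) *
        ∫ x in (0 : ℝ)..(Real.pi / 2), Real.sin x ^ m1 * Real.cos x ^ m2 := by
  obtain ⟨a, rfl⟩ : ∃ a, m1 = a + 2 := ⟨m1 - 2, by omega⟩
  rw [integral_sin_two_mul_pow_add_two_mul_cos_two_mul_pow_div_sin_sq]
  have hreduction := integral_sin_pow_add_two_mul_cos_pow a m2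
  have hB := integral_sin_pow_mul_cos_pow_pos a m2
  have hCB := integral_sin_pow_mul_cos_pow_succ_le a m2
  set B := ∫ x in (0 : ℝ)..π / 2, sin x ^ a * cos x ^ m2
  set C := ∫ x in (0 : ℝ)..π / 2, sin x ^ a * cos x ^ (m2 + 1)
  set G := ∫ x in (0 : ℝ)..π / 2, sin x ^ (a + 2) * cos x ^ m2
  push_cast
  have hsqrt := one_sub_sqrt_div_add_lt (x := (a : ℝ) + 2) (y := m2)
    (le_add_of_nonneg_left a.cast_nonneg) (by exact_mod_cast hm2)
  have hsqrt_le : √((m2 : ℝ) / (a + 2 + m2)) ≤ 1 :=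
    Real.sqrt_le_one.2 ((div_le_one (by positivity)).2 (by linarith))
  calc 1 / 2 * (1 - √((m2 : ℝ) / (a + 2 + m2))) * (B + C)
      ≤ (1 - √((m2 : ℝ) / (a + 2 + m2))) * B := by nlinarith
    _ < ((a + 2 + m2 + 1) * (a + 2 - 1) / (a + 2 + m2) ^ 2) * B :=
        mul_lt_mul_of_pos_right hsqrt hB
    _ = (2 * (a + 2 + m2) + 2) / (2 * (a + 2 + m2)) * G := by
        field_simp
        linear_combination -hreduction

/-- let `m1, m2 ≥ 2` be integers, not both even (or `(m1, m2) = (2, 2)`),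
`s = (1/2)·(1 − √(m2/(m1+m2)))` and `n = 2(m1+m2)`. Then
`s·∫₀^{π/4} sin^{m1}(2x)·cos^{m2}(2x)/sin²x dx
  < ((n+2)/n)·∫₀^{π/2} sin^{m1}x·cos^{m2}x dx`  (the inequality `K₁ < ((n+2)/n)·G`). -/
theorem K1_lt_G (m1 m2 : ℕ) (hm1 : 2 ≤ m1) (hm2 : 2 ≤ m2)
    (h : ¬(Even m1 ∧ Even m2) ∨ (m1 = 2 ∧ m2 = 2)) :
    (1 / 2) * (1 - Real.sqrt ((m2 : ℝ) / ((m1 : ℝ) + m2))) *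
        ∫ x in (0 : ℝ)..(Real.pi / 4),
          Real.sin (2 * x) ^ m1 * Real.cos (2 * x) ^ m2 / Real.sin x ^ 2 <
      ((2 * ((m1 : ℝ) + m2) + 2) / (2 * ((m1 : ℝ) + m2))) *
        ∫ x in (0 : ℝ)..(Real.pi / 2), Real.sin x ^ m1 * Real.cos x ^ m2 :=
  K1_lt_G_general m1 m2 hm1 hm2
end
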